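/- Let G_c be the universal comparison graph of the lattice graph (ℤ², ℓ¹) (which is well defined since ∂_V^{n+1} ≥ ∂_V^n holds on ℤ²). Then for every integer r ≥ 1, the sphere S(r; G_c) = {i ∈ ℕ_{≥1} : d_{G_c}(i, 1) = r} has exactly 4r elements and the closed ball B(r; G_c) = {i ∈ ℕ_{≥1} : d_{G_c}(i, 1) ≤ r} has exactly 1 + 2r(r+1) elements, where d_{G_c} denotes graph distance in G_c. -/

import Mathlib

open scoped ENNReal Classical

noncomputable section

/-- A function on a countable vertex set *vanishes at infinity* if every
super-level set `{x : t < |f x|}` with `t > 0` is finite. -/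
def VanishesAtInfinity {V : Type*} (f : V → ℝ) : Prop :=
  ∀ t : ℝ, 0 < t → {x : V | t < |f x|}.Finite

/-- The `k`-th largest value (k ≥ 1, counted with multiplicity) assumed by `|f|`. -/
def kthLargest {V : Type*} (f : V → ℝ) (k : ℕ) : ℝ :=
  sInf {t : ℝ | 0 ≤ t ∧ {x : V | t < |f x|}.Finite ∧ {x : V | t < |f x|}.ncard < k}

/-- The rearrangement of `f` with respect to the labelling `η`, where `η n` is the
vertex carrying label `n + 1`:  `f*(η (k-1)) = k`-th largest value of `|f|`. -/
def rearrangementOf {V : Type*} (η : ℕ → V) (f : V → ℝ) : V → ℝ :=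
  fun v => kthLargest f (Function.invFun η v + 1)

/-- `‖∇f‖_p^p = Σ_{x∼y} |f x - f y|^p`, each edge counted once (value in `ℝ≥0∞`). -/
def gradPPow {V : Type*} (G : SimpleGraph V) (f : V → ℝ) (p : ℝ) : ℝ≥0∞ :=
  ∑' e : G.edgeSet, Sym2.lift
    ⟨fun x y => ENNReal.ofReal (|f x - f y| ^ p), fun x y => by dsimp only; rw [abs_sub_comm]⟩
    (e : Sym2 V)

/-- `‖∇f‖_p = (Σ_{x∼y} |f x - f y|^p)^{1/p}` (value in `ℝ≥0∞`). -/
def gradP {V : Type*} (G : SimpleGraph V) (f : V → ℝ) (p : ℝ) : ℝ≥0∞ :=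
  gradPPow G f p ^ (1 / p)

/-- `‖∇f‖_∞ = sup_{x∼y} |f x - f y|` (value in `ℝ≥0∞`). -/
def gradTop {V : Type*} (G : SimpleGraph V) (f : V → ℝ) : ℝ≥0∞ :=
  ⨆ e : G.edgeSet, Sym2.lift
    ⟨fun x y => ENNReal.ofReal |f x - f y|, fun x y => by dsimp only; rw [abs_sub_comm]⟩
    (e : Sym2 V)

/-- The vertex boundary `∂_V(X)` of a set of vertices. -/
def vertexBoundary {V : Type*} (G : SimpleGraph V) (X : Set V) : Set V :=
  {z : V | z ∉ X ∧ ∃ x ∈ X, G.Adj z x}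

/-- The isoperimetric number `∂_V^n`: the least vertex-perimeter among sets of `n` vertices. -/
def isoNum {V : Type*} (G : SimpleGraph V) (n : ℕ) : ℕ :=
  sInf {m : ℕ | ∃ X : Set V, X.Finite ∧ X.ncard = n ∧
    (vertexBoundary G X).Finite ∧ (vertexBoundary G X).ncard = m}

/-- `∂_V^n` with the convention `∂_V^0 = 1`. -/
def isoNum₀ {V : Type*} (G : SimpleGraph V) (n : ℕ) : ℕ :=
  if n = 0 then 1 else isoNum G n

/-- `b` is a neighbour of `a` larger than `a` in the universal comparison graph:
`(a-1) + ∂_V^{a-1} < b ≤ a + ∂_V^a`. -/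
def cAdj {V : Type*} (G : SimpleGraph V) (a b : ℕ+) : Prop :=
  a < b ∧ (a : ℕ) - 1 + isoNum₀ G ((a : ℕ) - 1) < (b : ℕ) ∧
    (b : ℕ) ≤ (a : ℕ) + isoNum G (a : ℕ)

/-- The universal comparison graph `G_c` of `G`, a graph on the positive integers. -/
def comparisonGraph {V : Type*} (G : SimpleGraph V) : SimpleGraph ℕ+ where
  Adj a b := cAdj G a b ∨ cAdj G b a
  symm := ⟨fun a b h => Or.symm h⟩
  loopless := ⟨fun a h => by
    rcases h with h | h <;> exact absurd h.1 (lt_irrefl a)⟩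

/-- The lattice graph `(ℤ², ℓ¹)`. -/
def latticeZ2 : SimpleGraph (ℤ × ℤ) where
  Adj x y := |x.1 - y.1| + |x.2 - y.2| = 1
  symm := by
    constructor
    intro x y h
    try dsimp only at h ⊢
    rw [abs_sub_comm y.1 x.1, abs_sub_comm y.2 x.2]
    exact h
  loopless := by constructor; intro x h; simp at h

/-- The lattice graph `(ℤ^d, ℓ¹)`. -/
def latticeZd (d : ℕ) : SimpleGraph (Fin d → ℤ) where
  Adj x y := (∑ i, |x i - y i|) = 1
  symm := by
    constructor
    intro x y h
    try dsimp only at h ⊢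
    have : ∀ i, |y i - x i| = |x i - y i| := fun i => abs_sub_comm _ _
    simpa [this] using h
  loopless := by constructor; intro x h; simp at h

/-- `ℓ¹`-norm on `ℤ²`. -/
def l1 (x : ℤ × ℤ) : ℤ := |x.1| + |x.2|

/-- One step of the counterclockwise square spiral on `ℤ²`. -/
def spiralNext : ℤ × ℤ → ℤ × ℤ := fun p =>
  if p.1 = 0 ∧ p.2 = 0 then (1, 0)
  else if p.2 < 0 ∧ |p.1| ≤ -p.2 then (p.1 + 1, p.2)
  else if 0 < p.1 ∧ |p.2| < p.1 then (p.1, p.2 + 1)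
  else if 0 < p.2 ∧ p.1 ≤ p.2 ∧ -p.1 < p.2 then (p.1 - 1, p.2)
  else (p.1, p.2 - 1)
/-- The spiral labelling of `ℤ²` (0-indexed): `spiral (k-1)` is the vertex with
spiral label `k`, so `spiral 0 = (0,0)`, `spiral 1 = (1,0)`, `spiral 2 = (1,1)`, … -/
def spiral : ℕ → ℤ × ℤ := fun n => spiralNext^[n] (0, 0)


/-!
Deleting a point shows that `n + ∂_V^n` is nondecreasing in `n`; hence in the comparison graph
the ball of radius `k` about `1` is an initial segment `{1, …, g k}` with
`g (k + 1) = g k + ∂_V^{g k}`. On `ℤ²` the `ℓ¹`-balls are optimal: if `X` has more than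
`2k(k+1)` points, lies on `N` diagonals `x + y = c` and has at most `m` points on each, then
Cauchy–Davenport on neighbouring diagonals gives `|∂X| ≥ 2m + N + 1`, and `2m + N ≥ 4k + 3` by
AM-GM since `Nm ≥ |X|`. So `∂_V^{1 + 2k(k+1)} = 4(k+1)`, `g k = 1 + 2k(k+1)`, and the sphere of
radius `r` is `(g (r - 1), g r]`.
-/

section IsoNum

variable {V : Type*} {G : SimpleGraph V}

theorem vertexBoundary_finite (hG : ∀ v, (G.neighborSet v).Finite) {X : Set V} (hX : X.Finite) :
    (vertexBoundary G X).Finite :=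
  (hX.biUnion fun x _ => hG x).subset fun _ ⟨_, _, hx, hzx⟩ => Set.mem_biUnion hx hzx.symm

theorem isoNum_le_ncard_vertexBoundary {X : Set V} (hX : X.Finite)
    (hB : (vertexBoundary G X).Finite) : isoNum G X.ncard ≤ (vertexBoundary G X).ncard :=
  Nat.sInf_le ⟨X, hX, rfl, hB, rfl⟩

theorem exists_ncard_vertexBoundary_eq_isoNum [Infinite V] (hG : ∀ v, (G.neighborSet v).Finite)
    (n : ℕ) : ∃ X : Set V, X.Finite ∧ X.ncard = n ∧ (vertexBoundary G X).ncard = isoNum G n := by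
  obtain ⟨X, -, hX, hXn⟩ := (Set.infinite_univ (α := V)).exists_subset_ncard_eq n
  obtain ⟨Y, hY, hYn, -, hYB⟩ : isoNum G n ∈ {m | ∃ Y : Set V, Y.Finite ∧ Y.ncard = n ∧
      (vertexBoundary G Y).Finite ∧ (vertexBoundary G Y).ncard = m} :=
    Nat.sInf_mem ⟨_, X, hX, hXn, vertexBoundary_finite hG hX, rfl⟩
  exact ⟨Y, hY, hYn, hYB⟩

/-- Deleting a vertex from an optimal set of size `n + 1` adds at most that vertex to the
boundary. -/
theorem isoNum_le_isoNum_succ_add_one [Infinite V] (hG : ∀ v, (G.neighborSet v).Finite) (n : ℕ) :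
    isoNum G n ≤ isoNum G (n + 1) + 1 := by
  obtain ⟨X, hX, hXn, hXB⟩ := exists_ncard_vertexBoundary_eq_isoNum hG (n + 1)
  obtain ⟨p, hp⟩ := Set.nonempty_of_ncard_ne_zero (s := X) (by omega)
  have hsub : vertexBoundary G (X \ {p}) ⊆ insert p (vertexBoundary G X) := by
    rintro z ⟨hz, x, hx, hzx⟩
    by_cases hzp : z = p
    · exact .inl hzp
    · exact .inr ⟨fun hzX => hz ⟨hzX, hzp⟩, x, hx.1, hzx⟩
  calc isoNum G n = isoNum G (X \ {p}).ncard := by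
        rw [Set.ncard_sdiff_singleton_of_mem hp, hXn, Nat.add_sub_cancel]
    _ ≤ (vertexBoundary G (X \ {p})).ncard :=
        isoNum_le_ncard_vertexBoundary hX.sdiff (vertexBoundary_finite hG hX.sdiff)
    _ ≤ (insert p (vertexBoundary G X)).ncard :=
        Set.ncard_le_ncard hsub ((vertexBoundary_finite hG hX).insert p)
    _ ≤ isoNum G (n + 1) + 1 := hXB ▸ Set.ncard_insert_le _ _

theorem monotone_add_isoNum [Infinite V] (hG : ∀ v, (G.neighborSet v).Finite) :
    Monotone fun n => n + isoNum G n :=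
  monotone_nat_of_le_succ fun n => by
    have := isoNum_le_isoNum_succ_add_one hG n
    omega

end IsoNum

section ComparisonGraph

variable {V : Type*} (G : SimpleGraph V)

/-- The closed ball of radius `k` about `1` in the comparison graph is
`{1, …, comparisonBallSize G k}`, see `comparisonGraph_dist_le_iff`. -/
def comparisonBallSize : ℕ → ℕ
  | 0 => 1
  | k + 1 => comparisonBallSize k + isoNum G (comparisonBallSize k)

theorem one_le_comparisonBallSize : ∀ k, 1 ≤ comparisonBallSize G k
  | 0 => le_rfl
  | k + 1 => (one_le_comparisonBallSize k).trans (Nat.le_add_right _ _)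

theorem monotone_comparisonBallSize : Monotone (comparisonBallSize G) :=
  monotone_nat_of_le_succ fun _ => Nat.le_add_right _ _

variable {G}

theorem lt_comparisonBallSize (hpos : ∀ n, 0 < n → 0 < isoNum G n) :
    ∀ k, k < comparisonBallSize G k
  | 0 => Nat.one_pos
  | k + 1 => by
    have := hpos _ (one_le_comparisonBallSize G k)
    have := lt_comparisonBallSize hpos k
    simp only [comparisonBallSize]
    omega

/-- The least `a` with `i ≤ a + ∂_V^a` is a neighbour of `i` below `i`. -/
theorem exists_comparisonGraph_adj_le {b : ℕ} (hb : 1 ≤ b) {i : ℕ+} (hbi : b < i)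
    (hi : (i : ℕ) ≤ b + isoNum G b) :
    ∃ a : ℕ+, (a : ℕ) ≤ b ∧ (comparisonGraph G).Adj i a := by
  have hex : ∃ a, 1 ≤ a ∧ (i : ℕ) ≤ a + isoNum G a := ⟨b, hb, hi⟩
  obtain ⟨ha, hai⟩ := Nat.find_spec hex
  have hab : Nat.find hex ≤ b := Nat.find_min' hex ⟨hb, hi⟩
  have hai' : Nat.find hex < (i : ℕ) := by omega
  refine ⟨⟨Nat.find hex, ha⟩, hab, .inr ⟨PNat.coe_lt_coe _ _ |>.1 hai', ?_, hai⟩⟩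
  show Nat.find hex - 1 + isoNum₀ G (Nat.find hex - 1) < i
  rcases ha.eq_or_lt with h | h
  · rw [← h, isoNum₀, if_pos rfl]
    omega
  · have hmin := Nat.find_min hex (show Nat.find hex - 1 < Nat.find hex by omega)
    simp only [isoNum₀, if_neg (show Nat.find hex - 1 ≠ 0 by omega)]
    omega

theorem exists_walk_length_le_of_le_comparisonBallSize (k : ℕ) {i : ℕ+}
    (hi : (i : ℕ) ≤ comparisonBallSize G k) :
    ∃ w : (comparisonGraph G).Walk i 1, w.length ≤ k := by
  induction k generalizing i with
  | zero =>
    obtain rfl : i = 1 := PNat.coe_eq_one_iff.1 (le_antisymm hi i.pos)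
    exact ⟨.nil, le_rfl⟩
  | succ k ih =>
    by_cases hik : (i : ℕ) ≤ comparisonBallSize G k
    · obtain ⟨w, hw⟩ := ih hik
      exact ⟨w, hw.trans k.le_succ⟩
    · obtain ⟨a, hak, hia⟩ :=
        exists_comparisonGraph_adj_le (one_le_comparisonBallSize G k) (not_le.1 hik) hi
      obtain ⟨w, hw⟩ := ih hak
      exact ⟨.cons hia w, by simpa using hw⟩

theorem le_comparisonBallSize_add_length (hmono : Monotone fun n => n + isoNum G n)
    {u v : ℕ+} (w : (comparisonGraph G).Walk u v) {k : ℕ}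
    (hv : (v : ℕ) ≤ comparisonBallSize G k) :
    (u : ℕ) ≤ comparisonBallSize G (k + w.length) := by
  induction w with
  | nil => exact hv
  | @cons u c _ huc w ih =>
    rw [SimpleGraph.Walk.length_cons, ← add_assoc]
    rcases huc with ⟨hlt, -, -⟩ | ⟨-, -, hle⟩
    · exact (PNat.coe_lt_coe _ _ |>.2 hlt).le.trans
        ((ih hv).trans (monotone_comparisonBallSize G (Nat.le_succ _)))
    · exact hle.trans (hmono (ih hv))

theorem comparisonGraph_dist_le_iff (hmono : Monotone fun n => n + isoNum G n)
    (hpos : ∀ n, 0 < n → 0 < isoNum G n) (i : ℕ+) (k : ℕ) :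
    (comparisonGraph G).dist i 1 ≤ k ↔ (i : ℕ) ≤ comparisonBallSize G k := by
  constructor
  · intro h
    obtain ⟨w, -⟩ := exists_walk_length_le_of_le_comparisonBallSize i
      (lt_comparisonBallSize hpos i).le
    obtain ⟨w, hw⟩ := SimpleGraph.Reachable.exists_walk_length_eq_dist ⟨w⟩
    have := le_comparisonBallSize_add_length hmono w (k := 0) le_rfl
    rw [zero_add, hw] at this
    exact this.trans (monotone_comparisonBallSize G h)
  · intro h
    obtain ⟨w, hw⟩ := exists_walk_length_le_of_le_comparisonBallSize k h
    exact (SimpleGraph.dist_le w).trans hw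

end ComparisonGraph

section Lattice

theorem latticeZ2_adj_iff {p q : ℤ × ℤ} :
    latticeZ2.Adj p q ↔ (p.1 - q.1).natAbs + (p.2 - q.2).natAbs = 1 := by
  show |p.1 - q.1| + |p.2 - q.2| = 1 ↔ _
  rw [Int.abs_eq_natAbs, Int.abs_eq_natAbs]
  omega

theorem latticeZ2_neighborSet_finite (p : ℤ × ℤ) : (latticeZ2.neighborSet p).Finite :=
  (Set.finite_Icc (p - (1, 1)) (p + (1, 1))).subset fun q hq => by
    rw [SimpleGraph.mem_neighborSet, latticeZ2_adj_iff] at hq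
    exact ⟨⟨by simp; omega, by simp; omega⟩, ⟨by simp; omega, by simp; omega⟩⟩

def l1Sphere (m : ℕ) : Set (ℤ × ℤ) := {p | p.1.natAbs + p.2.natAbs = m}

def l1Ball (k : ℕ) : Set (ℤ × ℤ) := {p | p.1.natAbs + p.2.natAbs ≤ k}

theorem l1Ball_finite (k : ℕ) : (l1Ball k).Finite :=
  (Set.finite_Icc (-(k : ℤ), -(k : ℤ)) (k, k)).subset fun p (hp : _ ≤ k) =>
    ⟨⟨by simp; omega, by simp; omega⟩, ⟨by simp; omega, by simp; omega⟩⟩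

theorem l1Ball_succ (k : ℕ) : l1Ball (k + 1) = l1Ball k ∪ l1Sphere (k + 1) := by
  ext p
  simp only [l1Ball, l1Sphere, Set.mem_union, Set.mem_ofPred_eq]
  omega

/-- Walks counterclockwise once around `l1Sphere m`, starting at `(m, 0)`. -/
def l1SpherePoint (m j : ℕ) : ℤ × ℤ :=
  (if j ≤ 2 * m then (m : ℤ) - j else (j : ℤ) - 3 * m,
   if j ≤ m then (j : ℤ) else if j ≤ 3 * m then 2 * (m : ℤ) - j else (j : ℤ) - 4 * m)

theorem l1Sphere_eq_image {m : ℕ} (hm : 0 < m) :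
    l1Sphere m = (Finset.range (4 * m)).image (l1SpherePoint m) := by
  ext ⟨x, y⟩
  simp only [l1Sphere, Finset.coe_image, Finset.coe_range, Set.mem_image, Set.mem_Iio,
    Set.mem_ofPred_eq, l1SpherePoint, Prod.ext_iff]
  constructor
  · intro h
    refine ⟨if 0 < x ∧ 0 ≤ y then y.natAbs else if x ≤ 0 ∧ 0 < y then m + x.natAbs
      else if x < 0 ∧ y ≤ 0 then 2 * m + y.natAbs else 3 * m + x.natAbs, ?_⟩
    split_ifs <;> omega
  · rintro ⟨j, hj, rfl, rfl⟩
    split_ifs <;> omega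

theorem ncard_l1Sphere {m : ℕ} (hm : 0 < m) : (l1Sphere m).ncard = 4 * m := by
  rw [l1Sphere_eq_image hm, Set.ncard_coe_finset, Finset.card_image_of_injOn, Finset.card_range]
  intro i hi j hj h
  simp only [Finset.coe_range, Set.mem_Iio, l1SpherePoint, Prod.ext_iff] at hi hj h
  split_ifs at h <;> omega

theorem ncard_l1Ball (k : ℕ) : (l1Ball k).ncard = 1 + 2 * k * (k + 1) := by
  induction k with
  | zero =>
    rw [show l1Ball 0 = {(0, 0)} by ext; simp [l1Ball, Prod.ext_iff]]
    simp
  | succ k ih =>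
    have hdisj : Disjoint (l1Ball k) (l1Sphere (k + 1)) :=
      Set.disjoint_left.2 fun p (hp : _ ≤ k) (hp' : _ = k + 1) => by omega
    rw [l1Ball_succ, Set.ncard_union_eq hdisj (l1Ball_finite k)
      ((l1Ball_finite (k + 1)).subset fun p (hp : _ = _) => hp.le), ih,
      ncard_l1Sphere k.add_one_pos]
    ring

theorem vertexBoundary_l1Ball (k : ℕ) :
    vertexBoundary latticeZ2 (l1Ball k) = l1Sphere (k + 1) := by
  ext ⟨x, y⟩
  simp only [vertexBoundary, l1Ball, l1Sphere, Set.mem_ofPred_eq, latticeZ2_adj_iff, Prod.exists]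
  constructor
  · rintro ⟨hz, a, b, hab, hadj⟩
    omega
  · intro h
    refine ⟨by omega, ?_⟩
    rcases (by omega : 0 < x ∨ x < 0 ∨ (x = 0 ∧ 0 < y) ∨ (x = 0 ∧ y < 0)) with
      h' | h' | h' | h'
    · exact ⟨x - 1, y, by omega, by omega⟩
    · exact ⟨x + 1, y, by omega, by omega⟩
    · exact ⟨x, y - 1, by omega, by omega⟩
    · exact ⟨x, y + 1, by omega, by omega⟩

end Lattice

section Isoperimetry

open Finset
open scoped Pointwise

variable {X Y : Finset (ℤ × ℤ)}

/-- On the diagonal `x + y = c + δ` (`δ = ±1`) the closed neighbourhood of `X` contains the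
coordinates `x - y = v ± 1` for every `v` occurring on the diagonal `x + y = c` of `X`, so
Cauchy–Davenport gains one point. -/
theorem card_diag_add_one_le (hXY : ∀ p ∈ X, ∀ q, latticeZ2.Adj p q → q ∈ Y) {c δ : ℤ}
    (hδ : δ = 1 ∨ δ = -1) (hc : ∃ p ∈ X, p.1 + p.2 = c) :
    #{p ∈ X | p.1 + p.2 = c} + 1 ≤ #{q ∈ Y | q.1 + q.2 = c + δ} := by
  have hinj : Set.InjOn (fun p : ℤ × ℤ => p.1 - p.2) ↑{p ∈ X | p.1 + p.2 = c} := by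
    intro p hp q hq h
    simp only [coe_filter, Set.mem_ofPred_eq] at hp hq h
    exact Prod.ext (by omega) (by omega)
  set S := {p ∈ X | p.1 + p.2 = c}.image fun p => p.1 - p.2
  have hS : S.Nonempty := by
    obtain ⟨p, hp, rfl⟩ := hc
    exact ⟨_, mem_image_of_mem _ (mem_filter.2 ⟨hp, rfl⟩)⟩
  have hsub :
      S + ({-1, 1} : Finset ℤ) ⊆ {q ∈ Y | q.1 + q.2 = c + δ}.image fun p => p.1 - p.2 := by
    simp only [S, subset_iff, mem_add, mem_image, mem_filter, mem_insert, mem_singleton]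
    rintro _ ⟨_, ⟨p, ⟨hp, rfl⟩, rfl⟩, e, he, rfl⟩
    refine ⟨(p.1 + (δ + e) / 2, p.2 + (δ - e) / 2), ⟨hXY p hp _ ?_, ?_⟩, ?_⟩
    · rw [latticeZ2_adj_iff]
      omega
    all_goals omega
  calc #{p ∈ X | p.1 + p.2 = c} + 1 = #S + #({-1, 1} : Finset ℤ) - 1 := by
        rw [card_image_of_injOn hinj]
        rfl
    _ ≤ #(S + ({-1, 1} : Finset ℤ)) :=
        cauchy_davenport_add_of_linearOrder_isCancelAdd hS (by simp)
    _ ≤ _ := (card_le_card hsub).trans card_image_le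

theorem sum_card_diag_add_one_le (hXY : ∀ p ∈ X, ∀ q, latticeZ2.Adj p q → q ∈ Y)
    {t : Finset ℤ} (ht : t ⊆ X.image fun p => p.1 + p.2) {δ : ℤ} (hδ : δ = 1 ∨ δ = -1) :
    ∑ c ∈ t, (#{p ∈ X | p.1 + p.2 = c} + 1) ≤ #{q ∈ Y | q.1 + q.2 - δ ∈ t} := by
  rw [← sum_card_fiberwise_eq_card_filter]
  refine sum_le_sum fun c hc => ?_
  simp_rw [sub_eq_iff_eq_add]
  obtain ⟨p, hp, rfl⟩ := mem_image.1 (ht hc)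
  exact card_diag_add_one_le hXY hδ ⟨p, hp, rfl⟩

/-- For a fullest diagonal `c₀`, apply `card_diag_add_one_le` downwards to the diagonals `≤ c₀`
and upwards to those `≥ c₀`. -/
theorem card_add_four_mul_le_card (hXY : ∀ p ∈ X, ∀ q, latticeZ2.Adj p q → q ∈ Y)
    (hXsub : X ⊆ Y) {k : ℕ} (hk : 2 * k * (k + 1) < #X) : #X + 4 * (k + 1) ≤ #Y := by
  set U := X.image fun p => p.1 + p.2
  set F : ℤ → ℕ := fun c => #{p ∈ X | p.1 + p.2 = c}
  obtain ⟨c₀, hc₀, hmax⟩ := exists_max_image U F (image_nonempty.2 (card_pos.1 (by omega)))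
  set L := {c ∈ U | c ≤ c₀}
  set R := {c ∈ U | c₀ ≤ c}
  have hXle : #X ≤ #U * F c₀ := by
    rw [card_eq_sum_card_image (fun p => p.1 + p.2) X, ← smul_eq_mul]
    exact sum_le_card_nsmul _ _ _ hmax
  have hLR : ∑ c ∈ L, (F c + 1) + ∑ c ∈ R, (F c + 1) = #X + #U + (F c₀ + 1) := by
    have hunion : L ∪ R = U := by
      rw [← filter_or, filter_true_of_mem fun c _ => le_total c c₀]
    have hinter : L ∩ R = {c₀} := by
      ext c
      simp only [L, R, mem_inter, mem_filter, mem_singleton]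
      constructor
      · rintro ⟨⟨-, h₁⟩, -, h₂⟩
        exact le_antisymm h₁ h₂
      · rintro rfl
        exact ⟨⟨hc₀, le_rfl⟩, hc₀, le_rfl⟩
    rw [← sum_union_inter, hunion, hinter, sum_singleton, sum_add_distrib,
      ← card_eq_sum_card_image, card_eq_sum_ones U]
  have hleft : ∑ c ∈ L, (F c + 1) ≤ #{q ∈ Y | q.1 + q.2 - -1 ∈ L} :=
    sum_card_diag_add_one_le hXY (filter_subset _ U) (Or.inr rfl)
  have hright : ∑ c ∈ R, (F c + 1) ≤ #{q ∈ Y | q.1 + q.2 - 1 ∈ R} :=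
    sum_card_diag_add_one_le hXY (filter_subset _ U) (Or.inl rfl)
  have hmid : F c₀ ≤ #{q ∈ Y | q.1 + q.2 = c₀} :=
    card_le_card (filter_subset_filter _ hXsub)
  have hY : #{q ∈ Y | q.1 + q.2 - -1 ∈ L} + #{q ∈ Y | q.1 + q.2 = c₀}
      + #{q ∈ Y | q.1 + q.2 - 1 ∈ R} ≤ #Y := by
    have hL : ∀ c ∈ L, c ≤ c₀ := fun c hc => (mem_filter.1 hc).2
    have hR : ∀ c ∈ R, c₀ ≤ c := fun c hc => (mem_filter.1 hc).2
    rw [← card_union_of_disjoint, ← card_union_of_disjoint]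
    · exact card_le_card (union_subset (union_subset (filter_subset _ _) (filter_subset _ _))
        (filter_subset _ _))
    · refine disjoint_union_left.2 ⟨disjoint_filter.2 fun q _ h₁ h₂ => ?_,
        disjoint_filter.2 fun q _ h₁ h₂ => ?_⟩
      · have := hL _ h₁; have := hR _ h₂; omega
      · have := hR _ h₂; omega
    · exact disjoint_filter.2 fun q _ h₁ h₂ => by have := hL _ h₁; omega
  have hamgm : 4 * k + 3 ≤ 2 * F c₀ + #U := by
    nlinarith [sq_nonneg ((2 * F c₀ : ℤ) - #U)]
  omega

end Isoperimetry

theorem four_mul_succ_le_ncard_vertexBoundary {X : Set (ℤ × ℤ)} (hX : X.Finite) {k : ℕ}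
    (hk : 2 * k * (k + 1) < X.ncard) : 4 * (k + 1) ≤ (vertexBoundary latticeZ2 X).ncard := by
  have hB := vertexBoundary_finite latticeZ2_neighborSet_finite hX
  have hdisj : Disjoint X (vertexBoundary latticeZ2 X) :=
    Set.disjoint_right.2 fun _ hz => hz.1
  have hXY : ∀ p ∈ hX.toFinset, ∀ q, latticeZ2.Adj p q → q ∈ (hX.union hB).toFinset := by
    intro p hp q hpq
    simp only [Set.Finite.mem_toFinset] at hp ⊢
    by_cases hq : q ∈ X
    · exact .inl hq
    · exact .inr ⟨hq, p, hp, hpq.symm⟩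
  have := card_add_four_mul_le_card hXY (by simp) (k := k)
    (by rwa [← Set.ncard_eq_toFinset_card X hX])
  rw [← Set.ncard_eq_toFinset_card X hX, ← Set.ncard_eq_toFinset_card _ (hX.union hB),
    Set.ncard_union_eq hdisj hX hB] at this
  omega

theorem isoNum_latticeZ2_pos (n : ℕ) (hn : 0 < n) : 0 < isoNum latticeZ2 n := by
  obtain ⟨X, hX, rfl, hXB⟩ :=
    exists_ncard_vertexBoundary_eq_isoNum latticeZ2_neighborSet_finite n
  have := four_mul_succ_le_ncard_vertexBoundary hX (k := 0) hn
  omega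

theorem isoNum_latticeZ2_ncard_l1Ball (k : ℕ) :
    isoNum latticeZ2 (1 + 2 * k * (k + 1)) = 4 * (k + 1) := by
  refine le_antisymm ?_ ?_
  · have := isoNum_le_ncard_vertexBoundary (l1Ball_finite k)
      (vertexBoundary_finite latticeZ2_neighborSet_finite (l1Ball_finite k))
    rwa [ncard_l1Ball, vertexBoundary_l1Ball, ncard_l1Sphere k.add_one_pos] at this
  · obtain ⟨X, hX, hXn, hXB⟩ :=
      exists_ncard_vertexBoundary_eq_isoNum latticeZ2_neighborSet_finite (1 + 2 * k * (k + 1))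
    exact hXB ▸ four_mul_succ_le_ncard_vertexBoundary hX (by omega)

theorem comparisonBallSize_latticeZ2 (k : ℕ) :
    comparisonBallSize latticeZ2 k = 1 + 2 * k * (k + 1) := by
  induction k with
  | zero => rfl
  | succ k ih =>
    rw [comparisonBallSize, ih, isoNum_latticeZ2_ncard_l1Ball]
    ring

theorem encard_setOf_pnat_lt_and_le (a b : ℕ) :
    {i : ℕ+ | a < (i : ℕ) ∧ (i : ℕ) ≤ b}.encard = (b - a : ℕ) := by
  have himage :
      PNat.val '' {i : ℕ+ | a < (i : ℕ) ∧ (i : ℕ) ≤ b} = ↑(Finset.Ioc a b) := by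
    ext n
    simp only [Set.mem_image, Set.mem_ofPred_eq, Finset.coe_Ioc, Set.mem_Ioc]
    exact ⟨fun ⟨i, hi, hin⟩ => hin ▸ hi, fun hn => ⟨⟨n, by omega⟩, hn, rfl⟩⟩
  rw [← PNat.coe_injective.encard_image, himage, Set.encard_coe_eq_coe_finsetCard,
    Nat.card_Ioc]

/-- **Lemma (spheres and balls in the universal comparison graph of `(ℤ², ℓ¹)`).**
For every `r ≥ 1`, the sphere `S(r; G_c) = {i : d_{G_c}(i,1) = r}` has exactly `4r`
elements and the closed ball `B(r; G_c) = {i : d_{G_c}(i,1) ≤ r}` has exactly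
`1 + 2r(r+1)` elements. -/
theorem comparisonGraph_latticeZ2_sphere_ball (r : ℕ) (hr : 1 ≤ r) :
    {i : ℕ+ | (comparisonGraph latticeZ2).dist i 1 = r}.encard = (4 * r : ℕ)
    ∧ {i : ℕ+ | (comparisonGraph latticeZ2).dist i 1 ≤ r}.encard
        = (1 + 2 * r * (r + 1) : ℕ) := by
  have hdist := comparisonGraph_dist_le_iff
    (monotone_add_isoNum latticeZ2_neighborSet_finite) isoNum_latticeZ2_pos
  obtain ⟨s, rfl⟩ : ∃ s, r = s + 1 := ⟨r - 1, by omega⟩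
  have hsphere : {i : ℕ+ | (comparisonGraph latticeZ2).dist i 1 = s + 1}
      = {i : ℕ+ | comparisonBallSize latticeZ2 s < i ∧
          i ≤ comparisonBallSize latticeZ2 (s + 1)} := by
    ext i
    simp only [Set.mem_ofPred_eq, ← not_le, ← hdist]
    omega
  have hball : {i : ℕ+ | (comparisonGraph latticeZ2).dist i 1 ≤ s + 1}
      = {i : ℕ+ | 0 < (i : ℕ) ∧ i ≤ comparisonBallSize latticeZ2 (s + 1)} := by
    ext i
    simp only [Set.mem_ofPred_eq, ← hdist, i.pos, true_and]
  rw [hsphere, hball, encard_setOf_pnat_lt_and_le, encard_setOf_pnat_lt_and_le,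
    comparisonBallSize, Nat.add_sub_cancel_left, comparisonBallSize_latticeZ2,
    isoNum_latticeZ2_ncard_l1Ball, Nat.sub_zero]
  exact ⟨rfl, by ring_nf⟩
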